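/- Let $Q(x_3,y,\cdot)$ be a measurable family of quadratic forms on $\mathbb{R}^{3\times3}$ over $\Box=I\times\mathcal{Y}$ satisfying $\alpha|\operatorname{sym}G|^2\le Q(x_3,y,G)\le\beta|\operatorname{sym}G|^2$, and suppose each $Q(x_3,y,\cdot)$ is orthotropic. For $G\in\mathbb{R}^{2\times2}_{\rm sym}$ define $Q^\gamma_{\rm eff}(G)$ and $Q^\infty_{\rm eff}(G)$ as in the paper (infimum over the respective relaxation spaces $\mathbf{H}^\gamma_{\rm rel}$, $\mathbf{H}^\infty_{\rm rel}$). Then $Q^\infty_{\rm eff}(G)\le Q^\gamma_{\rm eff}(G)$ for every $\gamma\in(0,\infty)$ and every $G\in\mathbb{R}^{2\times2}_{\rm sym}$. -/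

import Mathlib

open Matrix

open MeasureTheory

noncomputable section

def sym3 (A : Matrix (Fin 3) (Fin 3) ℝ) : Matrix (Fin 3) (Fin 3) ℝ := (1/2 : ℝ) • (A + Aᵀ)

def nsq3 (A : Matrix (Fin 3) (Fin 3) ℝ) : ℝ := Matrix.trace (Aᵀ * A)

def iota2 (A : Matrix (Fin 2) (Fin 2) ℝ) : Matrix (Fin 3) (Fin 3) ℝ :=
  Matrix.of fun i j =>
    if hi : (i : ℕ) < 2 then if hj : (j : ℕ) < 2 then A ⟨i, hi⟩ ⟨j, hj⟩ else 0 else 0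

def e3col (d : Fin 3 → ℝ) : Matrix (Fin 3) (Fin 3) ℝ :=
  Matrix.of fun i j => if (j : ℕ) = 2 then d i else 0

def colMat (A : Fin 3 → Fin 2 → ℝ) (d : Fin 3 → ℝ) : Matrix (Fin 3) (Fin 3) ℝ :=
  Matrix.of fun i j => if hj : (j : ℕ) < 2 then A i ⟨j, hj⟩ else d i

def grad' (φ : (Fin 2 → ℝ) → (Fin 3 → ℝ)) (y : Fin 2 → ℝ) : Fin 3 → Fin 2 → ℝ :=
  fun i j => fderiv ℝ φ y (Pi.single j 1) i

/-- partial derivative in the `x₃` direction -/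
def d3 (φ : ℝ → (Fin 2 → ℝ) → Fin 3 → ℝ) (x₃ : ℝ) (y : Fin 2 → ℝ) : Fin 3 → ℝ :=
  fun i => deriv (fun s => φ s y i) x₃

/-- energies appearing in the definition of `Q^∞_eff(G)` -/
def energiesInf (Qf : ℝ → (Fin 2 → ℝ) → QuadraticForm ℝ (Matrix (Fin 3) (Fin 3) ℝ))
    (G : Matrix (Fin 2) (Fin 2) ℝ) : Set ℝ :=
  { e | ∃ (M : Matrix (Fin 2) (Fin 2) ℝ) (φ : ℝ → (Fin 2 → ℝ) → (Fin 3 → ℝ))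
      (d : ℝ → Fin 3 → ℝ),
      Mᵀ = M ∧ ContDiff ℝ 1 (fun p : ℝ × (Fin 2 → ℝ) => φ p.1 p.2) ∧
      (∀ (x₃ : ℝ) (y : Fin 2 → ℝ) (j : Fin 2), φ x₃ (y + Pi.single j 1) = φ x₃ y) ∧
      Continuous d ∧
      e = ∫ x₃ in Set.Ioo (-(1/2) : ℝ) (1/2), ∫ y in Set.Icc (0 : Fin 2 → ℝ) 1,
            Qf x₃ y (iota2 (x₃ • G) + iota2 M + sym3 (colMat (grad' (φ x₃) y) (d x₃))) }

/-- energies appearing in the definition of `Q^γ_eff(G)` -/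
def energiesGamma (Qf : ℝ → (Fin 2 → ℝ) → QuadraticForm ℝ (Matrix (Fin 3) (Fin 3) ℝ))
    (γ : ℝ) (G : Matrix (Fin 2) (Fin 2) ℝ) : Set ℝ :=
  { e | ∃ (M : Matrix (Fin 2) (Fin 2) ℝ) (φ : ℝ → (Fin 2 → ℝ) → (Fin 3 → ℝ)),
      Mᵀ = M ∧ ContDiff ℝ 1 (fun p : ℝ × (Fin 2 → ℝ) => φ p.1 p.2) ∧
      (∀ (x₃ : ℝ) (y : Fin 2 → ℝ) (j : Fin 2), φ x₃ (y + Pi.single j 1) = φ x₃ y) ∧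
      e = ∫ x₃ in Set.Ioo (-(1/2) : ℝ) (1/2), ∫ y in Set.Icc (0 : Fin 2 → ℝ) 1,
            Qf x₃ y (iota2 (x₃ • G) + iota2 M +
              sym3 (colMat (grad' (φ x₃) y) ((1/γ) • d3 φ x₃ y))) }

/-! ### Auxiliary lemmas -/

lemma nsq3_nonneg (A : Matrix (Fin 3) (Fin 3) ℝ) : 0 ≤ nsq3 A := by
  unfold nsq3 Matrix.trace
  refine Finset.sum_nonneg fun j _ => ?_
  simp only [Matrix.diag_apply, Matrix.mul_apply, Matrix.transpose_apply]
  exact Finset.sum_nonneg fun i _ => mul_self_nonneg _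

lemma sym3_add (A B : Matrix (Fin 3) (Fin 3) ℝ) : sym3 (A + B) = sym3 A + sym3 B := by
  unfold sym3; rw [Matrix.transpose_add]; module

lemma sym3_smul (t : ℝ) (A : Matrix (Fin 3) (Fin 3) ℝ) : sym3 (t • A) = t • sym3 A := by
  unfold sym3; rw [Matrix.transpose_smul]; module

lemma sym3_sub (A B : Matrix (Fin 3) (Fin 3) ℝ) : sym3 (A - B) = sym3 A - sym3 B := by
  unfold sym3; rw [Matrix.transpose_sub]; module

lemma Q_eq_of_sym_eq {α β : ℝ}
    (Q : QuadraticForm ℝ (Matrix (Fin 3) (Fin 3) ℝ))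
    (hlb : ∀ A, α * nsq3 (sym3 A) ≤ Q A)
    (hub : ∀ A, Q A ≤ β * nsq3 (sym3 A))
    {X X' : Matrix (Fin 3) (Fin 3) ℝ} (h : sym3 X = sym3 X') : Q X = Q X' := by
  set W := X' - X with hW
  have hsW : sym3 W = 0 := by rw [hW, sym3_sub, h, sub_self]
  have hQW : Q W = 0 := by
    have h1 := hlb W
    have h2 := hub W
    rw [hsW] at h1 h2
    simp only [nsq3, Matrix.transpose_zero, Matrix.zero_mul, Matrix.trace_zero, mul_zero] at h1 h2
    linarith
  have key : ∀ t : ℝ, Q (X + t • W) = Q X + t * QuadraticMap.polar (⇑Q) X W := by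
    intro t
    rw [QuadraticMap.map_add (⇑Q) X (t • W), QuadraticMap.polar_smul_right, QuadraticMap.map_smul,
      hQW]
    simp [smul_eq_mul]
  have hsym : ∀ t : ℝ, sym3 (X + t • W) = sym3 X := by
    intro t; rw [sym3_add, sym3_smul, hsW, smul_zero, add_zero]
  have hbd : ∀ t : ℝ, Q X + t * QuadraticMap.polar (⇑Q) X W ≤ β * nsq3 (sym3 X) := by
    intro t; rw [← key t]
    have := hub (X + t • W); rwa [hsym t] at this
  have hc : QuadraticMap.polar (⇑Q) X W = 0 := by
    by_contra hc
    set c := QuadraticMap.polar (⇑Q) X W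
    set K := β * nsq3 (sym3 X)
    have := hbd ((K - Q X + 1)/c)
    rw [div_mul_cancel₀ _ hc] at this
    linarith
  have := key 1
  rw [one_smul, hc, mul_zero, add_zero] at this
  rw [hW] at this
  simpa using this.symm

section DerivLemmas

variable (φ : ℝ → (Fin 2 → ℝ) → (Fin 3 → ℝ))

lemma slice_hasFDerivAt (hφ : ContDiff ℝ 1 (fun p : ℝ × (Fin 2 → ℝ) => φ p.1 p.2))
    (x₃ : ℝ) (y : Fin 2 → ℝ) :
    HasFDerivAt (φ x₃)
      ((fderiv ℝ (fun p : ℝ × (Fin 2 → ℝ) => φ p.1 p.2) (x₃, y)).comp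
        (ContinuousLinearMap.inr ℝ ℝ (Fin 2 → ℝ))) y := by
  have h1 : HasFDerivAt (fun p : ℝ × (Fin 2 → ℝ) => φ p.1 p.2)
      (fderiv ℝ (fun p : ℝ × (Fin 2 → ℝ) => φ p.1 p.2) (x₃, y)) (x₃, y) :=
    (hφ.differentiable one_ne_zero (x₃, y)).hasFDerivAt
  have h2 : HasFDerivAt (fun y : Fin 2 → ℝ => (x₃, y))
      (ContinuousLinearMap.inr ℝ ℝ (Fin 2 → ℝ)) y :=
    (hasFDerivAt_const x₃ y).prodMk (hasFDerivAt_id y)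
  exact h1.comp y h2

lemma gradφ_eq (hφ : ContDiff ℝ 1 (fun p : ℝ × (Fin 2 → ℝ) => φ p.1 p.2))
    (x₃ : ℝ) (y : Fin 2 → ℝ) (i : Fin 3) (j : Fin 2) :
    grad' (φ x₃) y i j =
      fderiv ℝ (fun p : ℝ × (Fin 2 → ℝ) => φ p.1 p.2) (x₃, y) (0, Pi.single j 1) i := by
  rw [grad', (slice_hasFDerivAt φ hφ x₃ y).fderiv]
  simp

lemma d3_eq (hφ : ContDiff ℝ 1 (fun p : ℝ × (Fin 2 → ℝ) => φ p.1 p.2))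
    (x₃ : ℝ) (y : Fin 2 → ℝ) (i : Fin 3) :
    d3 φ x₃ y i = fderiv ℝ (fun p : ℝ × (Fin 2 → ℝ) => φ p.1 p.2) (x₃, y) (1, 0) i := by
  have h1 : HasFDerivAt (fun p : ℝ × (Fin 2 → ℝ) => φ p.1 p.2)
      (fderiv ℝ (fun p : ℝ × (Fin 2 → ℝ) => φ p.1 p.2) (x₃, y)) (x₃, y) :=
    (hφ.differentiable one_ne_zero (x₃, y)).hasFDerivAt
  have h2 : HasDerivAt (fun s : ℝ => (s, y)) ((1 : ℝ), (0 : Fin 2 → ℝ)) x₃ :=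
    (hasDerivAt_id x₃).prodMk (hasDerivAt_const x₃ y)
  have h3 : HasDerivAt (fun s => φ s y)
      (fderiv ℝ (fun p : ℝ × (Fin 2 → ℝ) => φ p.1 p.2) (x₃, y) (1, 0)) x₃ :=
    by have := h1.comp_hasDerivAt x₃ h2; exact this
  have h4 : HasDerivAt (fun s => φ s y i)
      (fderiv ℝ (fun p : ℝ × (Fin 2 → ℝ) => φ p.1 p.2) (x₃, y) (1, 0) i) x₃ := by
    have := ((ContinuousLinearMap.proj i :
      (Fin 3 → ℝ) →L[ℝ] ℝ).hasFDerivAt).comp_hasDerivAt x₃ h3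
    exact this
  rw [d3]; exact h4.deriv

/-- the competitor obtained by dropping the third component of `φ` -/
def psi3 (x₃ : ℝ) (y : Fin 2 → ℝ) : Fin 3 → ℝ :=
  fun i => if (i : ℕ) < 2 then φ x₃ y i else 0

lemma gradpsi_eq (hφ : ContDiff ℝ 1 (fun p : ℝ × (Fin 2 → ℝ) => φ p.1 p.2))
    (x₃ : ℝ) (y : Fin 2 → ℝ) (i : Fin 3) (j : Fin 2) :
    grad' (psi3 φ x₃) y i j = if (i : ℕ) < 2 then grad' (φ x₃) y i j else 0 := by
  set D := (fderiv ℝ (fun p : ℝ × (Fin 2 → ℝ) => φ p.1 p.2) (x₃, y)).comp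
        (ContinuousLinearMap.inr ℝ ℝ (Fin 2 → ℝ)) with hD
  have hψ : HasFDerivAt (psi3 φ x₃)
      (ContinuousLinearMap.pi fun i : Fin 3 =>
        if (i : ℕ) < 2 then (ContinuousLinearMap.proj i : (Fin 3 → ℝ) →L[ℝ] ℝ).comp D else 0)
      y := by
    rw [hasFDerivAt_pi]
    intro i
    by_cases hi : (i : ℕ) < 2
    · simp only [psi3, if_pos hi]
      exact (ContinuousLinearMap.proj i : (Fin 3 → ℝ) →L[ℝ] ℝ).hasFDerivAt.comp y
        (slice_hasFDerivAt φ hφ x₃ y)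
    · simp only [psi3, if_neg hi]
      exact hasFDerivAt_const 0 y
  rw [grad', hψ.fderiv]
  by_cases hi : (i : ℕ) < 2
  · simp only [ContinuousLinearMap.pi_apply, if_pos hi, grad',
      (slice_hasFDerivAt φ hφ x₃ y).fderiv]
    simp [hD]
  · simp [ContinuousLinearMap.pi_apply, if_neg hi, show ¬ (i : ℕ) ≤ 1 by omega]

end DerivLemmas

section AlgebraLemmas

variable (x₃ : ℝ) (G M : Matrix (Fin 2) (Fin 2) ℝ) (A : Fin 3 → Fin 2 → ℝ) (w : Fin 3 → ℝ)

/-- the effective 2×2 matrix -/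
def Fmat : Matrix (Fin 2) (Fin 2) ℝ :=
  Matrix.of fun i j => x₃ * G i j + M i j + (1/2) * (A i.castSucc j + A j.castSucc i)

/-- the extra third-column vector -/
def vvec : Fin 3 → ℝ := ![w 0 + A 2 0, w 1 + A 2 1, w 2]

lemma claim1 :
    iota2 (x₃ • G) + iota2 M + sym3 (colMat (fun i j => if (i : ℕ) < 2 then A i j else 0) 0) =
      iota2 (Fmat x₃ G M A) := by
  ext i j
  fin_cases i <;> fin_cases j <;>
    simp [iota2, sym3, colMat, Fmat, Matrix.add_apply, Matrix.smul_apply, Matrix.transpose_apply,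
      Matrix.of_apply, Fin.isValue] <;> ring

lemma claim2 :
    sym3 (iota2 (x₃ • G) + iota2 M + sym3 (colMat A w)) =
      sym3 (iota2 (Fmat x₃ G M A) + e3col (vvec A w)) := by
  ext i j
  fin_cases i <;> fin_cases j <;>
    simp [iota2, sym3, colMat, e3col, Fmat, vvec, Matrix.add_apply, Matrix.smul_apply,
      Matrix.transpose_apply, Matrix.of_apply, Fin.isValue] <;> ring

end AlgebraLemmas

lemma cont_aux {X : Type*} [TopologicalSpace X] (g1 : X → Fin 3 → Fin 2 → ℝ) (g2 : X → Fin 3 → ℝ)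
    (hg1 : Continuous g1) (hg2 : Continuous g2) (C : X → ℝ) (hC : Continuous C)
    (G M : Matrix (Fin 2) (Fin 2) ℝ) :
    Continuous fun x => iota2 (C x • G) + iota2 M + sym3 (colMat (g1 x) (g2 x)) := by
  refine continuous_pi fun i => continuous_pi fun j => ?_
  simp only [iota2, sym3, colMat, Matrix.add_apply, Matrix.smul_apply, Matrix.transpose_apply,
    Matrix.of_apply, smul_eq_mul]
  split_ifs <;> fun_prop

/-- For orthotropic elastic laws, `Q^∞_eff ≤ Q^γ_eff` for every `γ ∈ (0,∞)`. -/
theorem stmt15 (α β : ℝ) (hα : 0 < α) (hαβ : α ≤ β)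
    (Qf : ℝ → (Fin 2 → ℝ) → QuadraticForm ℝ (Matrix (Fin 3) (Fin 3) ℝ))
    (hQcont : Continuous
      (fun p : ℝ × (Fin 2 → ℝ) × Matrix (Fin 3) (Fin 3) ℝ => Qf p.1 p.2.1 p.2.2))
    (hQlb : ∀ x₃ y A, α * nsq3 (sym3 A) ≤ Qf x₃ y A)
    (hQub : ∀ x₃ y A, Qf x₃ y A ≤ β * nsq3 (sym3 A))
    (hort : ∀ (x₃ : ℝ) (y : Fin 2 → ℝ) (F : Matrix (Fin 2) (Fin 2) ℝ) (dd : Fin 3 → ℝ),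
      Qf x₃ y (iota2 F + e3col dd) = Qf x₃ y (iota2 F) + Qf x₃ y (e3col dd))
    (γ : ℝ) (hγ : 0 < γ)
    (G : Matrix (Fin 2) (Fin 2) ℝ) (hG : Gᵀ = G) :
    sInf (energiesInf Qf G) ≤ sInf (energiesGamma Qf γ G) := by
  have hQ0 : ∀ x₃ y A, (0 : ℝ) ≤ Qf x₃ y A := fun x₃ y A =>
    le_trans (mul_nonneg hα.le (nsq3_nonneg _)) (hQlb x₃ y A)
  -- lower bound for energiesInf
  have hbdd : BddBelow (energiesInf Qf G) := by
    refine ⟨0, fun e he => ?_⟩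
    obtain ⟨M, φ, d, _, _, _, _, rfl⟩ := he
    refine setIntegral_nonneg measurableSet_Ioo fun x _ => ?_
    exact setIntegral_nonneg measurableSet_Icc fun y _ => hQ0 _ _ _
  -- energiesGamma is nonempty
  have hne : (energiesGamma Qf γ G).Nonempty := by
    refine ⟨_, 0, 0, Matrix.transpose_zero, ?_, fun _ _ _ => rfl, rfl⟩
    exact contDiff_const
  refine le_csInf hne ?_
  rintro e ⟨M, φ, hM, hφC, hper, rfl⟩
  -- the competitor ψ
  have hψC : ContDiff ℝ 1 (fun p : ℝ × (Fin 2 → ℝ) => psi3 φ p.1 p.2) := by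
    rw [contDiff_pi]
    intro i
    by_cases hi : (i : ℕ) < 2
    · simpa [psi3, hi] using contDiff_pi.1 hφC i
    · simpa [psi3, hi] using contDiff_const (c := (0 : ℝ))
  have hψper : ∀ (x₃ : ℝ) (y : Fin 2 → ℝ) (j : Fin 2),
      psi3 φ x₃ (y + Pi.single j 1) = psi3 φ x₃ y := by
    intro x₃ y j
    funext i
    simp only [psi3]
    rw [hper x₃ y j]
  -- the ∞-energy of the competitor
  set e' : ℝ := ∫ x₃ in Set.Ioo (-(1/2) : ℝ) (1/2), ∫ y in Set.Icc (0 : Fin 2 → ℝ) 1,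
      Qf x₃ y (iota2 (x₃ • G) + iota2 M +
        sym3 (colMat (grad' (psi3 φ x₃) y) ((fun _ : ℝ => (0 : Fin 3 → ℝ)) x₃))) with he'
  have hmem : e' ∈ energiesInf Qf G :=
    ⟨M, psi3 φ, fun _ => 0, hM, hψC, hψper, continuous_const, he'⟩
  refine le_trans (csInf_le hbdd hmem) ?_
  -- pointwise inequality
  have hpt : ∀ (x₃ : ℝ) (y : Fin 2 → ℝ),
      Qf x₃ y (iota2 (x₃ • G) + iota2 M +
        sym3 (colMat (grad' (psi3 φ x₃) y) ((fun _ : ℝ => (0 : Fin 3 → ℝ)) x₃))) ≤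
      Qf x₃ y (iota2 (x₃ • G) + iota2 M +
        sym3 (colMat (grad' (φ x₃) y) ((1/γ) • d3 φ x₃ y))) := by
    intro x₃ y
    set A := grad' (φ x₃) y with hA
    set w := (1/γ) • d3 φ x₃ y with hw
    have hB : grad' (psi3 φ x₃) y =
        fun (i : Fin 3) (j : Fin 2) => if (i : ℕ) < 2 then A i j else 0 := by
      funext i j
      exact gradpsi_eq φ hφC x₃ y i j
    have h1 : Qf x₃ y (iota2 (x₃ • G) + iota2 M +
        sym3 (colMat (grad' (psi3 φ x₃) y) ((fun _ : ℝ => (0 : Fin 3 → ℝ)) x₃))) =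
        Qf x₃ y (iota2 (Fmat x₃ G M A)) := by
      rw [hB]
      exact congrArg _ (claim1 x₃ G M A)
    have h2 : Qf x₃ y (iota2 (x₃ • G) + iota2 M + sym3 (colMat A w)) =
        Qf x₃ y (iota2 (Fmat x₃ G M A) + e3col (vvec A w)) :=
      Q_eq_of_sym_eq (Qf x₃ y) (hQlb x₃ y) (hQub x₃ y) (claim2 x₃ G M A w)
    rw [h1, h2, hort x₃ y (Fmat x₃ G M A) (vvec A w)]
    have := hQ0 x₃ y (e3col (vvec A w))
    linarith
  -- continuity of the two integrands
  have hL : Continuous (fun p : ℝ × (Fin 2 → ℝ) =>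
      fderiv ℝ (fun p : ℝ × (Fin 2 → ℝ) => φ p.1 p.2) p) := hφC.continuous_fderiv one_ne_zero
  have hLv : ∀ (v : ℝ × (Fin 2 → ℝ)) (i : Fin 3),
      Continuous fun p : ℝ × (Fin 2 → ℝ) =>
        fderiv ℝ (fun p : ℝ × (Fin 2 → ℝ) => φ p.1 p.2) p v i := fun v i =>
    (continuous_apply i).comp (hL.clm_apply continuous_const)
  have hAc : Continuous fun p : ℝ × (Fin 2 → ℝ) => grad' (φ p.1) p.2 := by
    refine continuous_pi fun i => continuous_pi fun j => ?_
    have : (fun p : ℝ × (Fin 2 → ℝ) => grad' (φ p.1) p.2 i j) = fun p =>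
        fderiv ℝ (fun p : ℝ × (Fin 2 → ℝ) => φ p.1 p.2) p (0, Pi.single j 1) i :=
      funext fun p => gradφ_eq φ hφC p.1 p.2 i j
    rw [this]; exact hLv _ i
  have hdc : Continuous fun p : ℝ × (Fin 2 → ℝ) => (1/γ) • d3 φ p.1 p.2 := by
    refine continuous_pi fun i => ?_
    simp only [Pi.smul_apply, smul_eq_mul]
    have : (fun p : ℝ × (Fin 2 → ℝ) => d3 φ p.1 p.2 i) = fun p =>
        fderiv ℝ (fun p : ℝ × (Fin 2 → ℝ) => φ p.1 p.2) p (1, 0) i :=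
      funext fun p => d3_eq φ hφC p.1 p.2 i
    exact continuous_const.mul (by rw [this]; exact hLv _ i)
  have hBc : Continuous fun p : ℝ × (Fin 2 → ℝ) => grad' (psi3 φ p.1) p.2 := by
    refine continuous_pi fun i => continuous_pi fun j => ?_
    have : (fun p : ℝ × (Fin 2 → ℝ) => grad' (psi3 φ p.1) p.2 i j) = fun p =>
        if (i : ℕ) < 2 then grad' (φ p.1) p.2 i j else 0 :=
      funext fun p => gradpsi_eq φ hφC p.1 p.2 i j
    rw [this]
    split_ifs
    · exact (continuous_apply j).comp ((continuous_apply i).comp hAc)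
    · exact continuous_const
  have hNφc : Continuous fun p : ℝ × (Fin 2 → ℝ) => iota2 (p.1 • G) + iota2 M +
      sym3 (colMat (grad' (φ p.1) p.2) ((1/γ) • d3 φ p.1 p.2)) :=
    cont_aux _ _ hAc hdc _ continuous_fst G M
  have hNψc : Continuous fun p : ℝ × (Fin 2 → ℝ) => iota2 (p.1 • G) + iota2 M +
      sym3 (colMat (grad' (psi3 φ p.1) p.2) ((fun _ : ℝ => (0 : Fin 3 → ℝ)) p.1)) :=
    cont_aux _ _ hBc continuous_const _ continuous_fst G M
  have hHφ : Continuous (Function.uncurry fun (x₃ : ℝ) (y : Fin 2 → ℝ) =>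
      Qf x₃ y (iota2 (x₃ • G) + iota2 M +
        sym3 (colMat (grad' (φ x₃) y) ((1/γ) • d3 φ x₃ y)))) :=
    hQcont.comp (continuous_fst.prodMk (continuous_snd.prodMk hNφc))
  have hHψ : Continuous (Function.uncurry fun (x₃ : ℝ) (y : Fin 2 → ℝ) =>
      Qf x₃ y (iota2 (x₃ • G) + iota2 M +
        sym3 (colMat (grad' (psi3 φ x₃) y) ((fun _ : ℝ => (0 : Fin 3 → ℝ)) x₃)))) :=
    hQcont.comp (continuous_fst.prodMk (continuous_snd.prodMk hNψc))
  -- continuity of the parametric integrals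
  have hgφ : Continuous fun x₃ : ℝ => ∫ y in Set.Icc (0 : Fin 2 → ℝ) 1,
      Qf x₃ y (iota2 (x₃ • G) + iota2 M +
        sym3 (colMat (grad' (φ x₃) y) ((1/γ) • d3 φ x₃ y))) :=
    continuous_parametric_integral_of_continuous hHφ isCompact_Icc
  have hgψ : Continuous fun x₃ : ℝ => ∫ y in Set.Icc (0 : Fin 2 → ℝ) 1,
      Qf x₃ y (iota2 (x₃ • G) + iota2 M +
        sym3 (colMat (grad' (psi3 φ x₃) y) ((fun _ : ℝ => (0 : Fin 3 → ℝ)) x₃))) :=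
    continuous_parametric_integral_of_continuous hHψ isCompact_Icc
  -- compare the integrals
  rw [he']
  refine setIntegral_mono_on
    ((hgψ.integrableOn_Icc (a := -(1/2)) (b := 1/2)).mono_set Set.Ioo_subset_Icc_self)
    ((hgφ.integrableOn_Icc (a := -(1/2)) (b := 1/2)).mono_set Set.Ioo_subset_Icc_self)
    measurableSet_Ioo fun x₃ _ => ?_
  refine setIntegral_mono_on ?_ ?_ measurableSet_Icc fun y _ => hpt x₃ y
  · exact (hHψ.comp (Continuous.prodMk_right x₃)).integrableOn_Icc
  · exact (hHφ.comp (Continuous.prodMk_right x₃)).integrableOn_Icc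

end
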